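/- arXiv:1804.04399 — 3 statements merged into one kernel-verified Lean document; each statement's English description precedes it below -/
import Mathlib

section
/- Let $I_1 = \sum_{d\ge 1} \frac{2\,(2d)!\,(2d-1)!}{(d!)^4} q^d \in \mathbb{Q}[[q]]$ be a formal power series, let $C_1 = 1 + q\, \frac{d I_1}{dq}$, let $\mathcal{X} = \big(q\,\frac{dC_1}{dq}\big)\cdot C_1^{-1}$ (well defined since $C_1$ has constant term $1$, hence is invertible in $\mathbb{Q}[[q]]$), and let $K \in \mathbb{Q}[[q]]$ be the multiplicative inverse of $1-16q$. Then the formal power series identity $\mathcal{X}^2 - (K-1)\,\mathcal{X} - \tfrac{1}{4}(K-1) + q\,\frac{d\mathcal{X}}{dq} = 0$ holds in $\mathbb{Q}[[q]]$. -/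
open PowerSeries

/-- The series `I₁ = ∑_{d≥1} 2 (2d)! (2d-1)! / (d!)^4 q^d` in `ℚ[[q]]`. -/
noncomputable def I₁ : PowerSeries ℚ :=
  PowerSeries.mk fun d => if d = 0 then 0 else
    (2 * (Nat.factorial (2 * d)) * (Nat.factorial (2 * d - 1)) : ℚ) /
      ((Nat.factorial d : ℚ)) ^ 4

/-- `C₁ = 1 + q dI₁/dq`. -/
noncomputable def C₁ : PowerSeries ℚ := 1 + PowerSeries.X * (d⁄dX ℚ I₁)

/-- `𝒳 = (q dC₁/dq) · C₁⁻¹`. -/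
noncomputable def 𝒳 : PowerSeries ℚ := (PowerSeries.X * (d⁄dX ℚ C₁)) * C₁⁻¹

/-- `K = (1 - 16 q)⁻¹`, the multiplicative inverse of `1 - 16 q` in `ℚ[[q]]`. -/
noncomputable def K : PowerSeries ℚ := (1 - 16 * PowerSeries.X)⁻¹

/-!
`C₁ = ∑ binom(2n, n)² qⁿ`, so the recursion `(n+1)² cₙ₊₁ = 4(2n+1)² cₙ` of its coefficients
says that `C₁` solves the hypergeometric equation `(1 - 16q) θ²C₁ = 16q θC₁ + 4q C₁`, where
`θ = q d/dq`. The logarithmic derivative `𝒳 = θC₁ / C₁` satisfies `θ𝒳 = θ²C₁ / C₁ - 𝒳²`,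
which turns this second order linear equation into the stated Riccati equation.
-/

theorem PowerSeries.coeff_X_mul_derivative {R : Type*} [CommSemiring R] (f : R⟦X⟧) (n : ℕ) :
    coeff n (X * d⁄dX R f) = n * coeff n f := by
  cases n with
  | zero => simp
  | succ m => rw [coeff_succ_X_mul, coeff_derivative]; push_cast; ring

theorem PowerSeries.X_mul_derivative_mul_inv {k : Type*} [Field k] (f : k⟦X⟧) :
    X * d⁄dX k (X * d⁄dX k f * f⁻¹)
      = X * d⁄dX k (X * d⁄dX k f) * f⁻¹ - (X * d⁄dX k f * f⁻¹) ^ 2 := by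
  rw [Derivation.leibniz, derivative_inv', smul_eq_mul, smul_eq_mul]
  ring

theorem coeff_C₁ (n : ℕ) : coeff n C₁ = (n.centralBinom : ℚ) ^ 2 := by
  rw [C₁, map_add, coeff_X_mul_derivative, I₁, coeff_mk]
  rcases Nat.eq_zero_or_pos n with rfl | hn
  · simp
  have h2n : ((2 * n).factorial : ℚ) = 2 * n * (2 * n - 1).factorial := by
    exact_mod_cast (Nat.mul_factorial_pred (by omega : 2 * n ≠ 0)).symm
  have hfac : (n.factorial : ℚ) ≠ 0 := by positivity
  rw [Nat.centralBinom_eq_two_mul_choose, Nat.cast_choose ℚ (by omega : n ≤ 2 * n),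
    show 2 * n - n = n by omega, if_neg hn.ne', coeff_one, if_neg hn.ne', h2n]
  field_simp
  ring

theorem succ_sq_mul_coeff_C₁_succ (n : ℕ) :
    ((n : ℚ) + 1) ^ 2 * coeff (n + 1) C₁ = 4 * (2 * n + 1) ^ 2 * coeff n C₁ := by
  have h := congrArg (fun m : ℕ => (m : ℚ) ^ 2) (Nat.succ_mul_centralBinom_succ n)
  simp only [Nat.cast_mul, Nat.cast_add, Nat.cast_one, Nat.cast_ofNat] at h
  rw [coeff_C₁, coeff_C₁]
  linear_combination h

theorem hypergeometric_equation_C₁ :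
    (1 - 16 * X) * (X * d⁄dX ℚ (X * d⁄dX ℚ C₁)) = 16 * X * (X * d⁄dX ℚ C₁) + 4 * X * C₁ := by
  ext n
  have h16 : (16 : ℚ⟦X⟧) = C 16 := (map_ofNat C 16).symm
  have h4 : (4 : ℚ⟦X⟧) = C 4 := (map_ofNat C 4).symm
  rw [sub_mul, one_mul, mul_assoc 16, mul_assoc 16, mul_assoc 4, map_sub, map_add, h16, h4,
    coeff_C_mul, coeff_C_mul, coeff_C_mul, coeff_X_mul_derivative, coeff_X_mul_derivative]
  cases n with
  | zero => simp
  | succ m =>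
    simp only [coeff_succ_X_mul, coeff_X_mul_derivative]
    push_cast
    linear_combination succ_sq_mul_coeff_C₁_succ m

theorem X_squared_relation :
    𝒳 ^ 2 - (K - 1) * 𝒳 - PowerSeries.C (R := ℚ) (1 / 4) * (K - 1)
      + PowerSeries.X * (d⁄dX ℚ 𝒳) = 0 := by
  have hC₁ : C₁ * C₁⁻¹ = 1 := PowerSeries.mul_inv_cancel _ (by simp [C₁])
  have hK : (1 - 16 * X) * K = 1 := PowerSeries.mul_inv_cancel _ (by simp)
  have hquarter : C (1 / 4 : ℚ) * 16 = 4 := by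
    rw [← map_ofNat C 16, ← map_ofNat C 4, ← map_mul]; norm_num
  rw [𝒳, X_mul_derivative_mul_inv]
  linear_combination C₁⁻¹ * K * hypergeometric_equation_C₁
    - (X * d⁄dX ℚ (X * d⁄dX ℚ C₁) * C₁⁻¹ + X * d⁄dX ℚ C₁ * C₁⁻¹ + C (1 / 4)) * hK
    + 4 * X * K * hC₁ - X * K * hquarter
end

section
/- For every real $q$ with $|q|<1/4$, the series $I_0(q)=\sum_{d\ge 0}\binom{2d}{d} q^d$ and $J(q)=\sum_{d\ge 1}\binom{2d}{d}\, H_{2d}\, q^d$ converge, the quotient $J/I_0$ is differentiable on $(-1/4,1/4)$, and the identity $q\,\frac{d}{dq}\Big(\frac{J}{I_0}\Big)(q) = \frac{4q}{1-4q} - \frac{1}{2\sqrt{1-4q}} + \frac{1}{2}$ holds. -/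
open Real

/-- `I₀(q) = ∑_{d ≥ 0} C(2d, d) q^d`. -/
noncomputable def I₀ (q : ℝ) : ℝ := ∑' d : ℕ, (Nat.centralBinom d : ℝ) * q ^ d

/-- `J(q) = ∑_{d ≥ 1} C(2d, d) H_{2d} q^d` (the `d = 0` term vanishes since `H_0 = 0`). -/
noncomputable def J (q : ℝ) : ℝ :=
  ∑' d : ℕ, (Nat.centralBinom d : ℝ) * (harmonic (2 * d) : ℝ) * q ^ d

/-! The coefficients `a n = C(2n, n)` and `b n = C(2n, n) H_{2n}` satisfy
`(n + 1) a (n + 1) = (4n + 2) a n` and `(n + 1) b (n + 1) - (4n + 2) b n = a (n + 1) / 2 + 2 a n`.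
Inside the radius of convergence these become the differential equations
`(1 - 4q) I₀' = 2 I₀` and `q ((1 - 4q) J' - 2 J) = (I₀ - 1) / 2 + 2 q I₀`. The first one forces
`√(1 - 4q) I₀` to be constant, so `I₀ = (1 - 4q)^(-1/2)`. By the quotient rule
`q (J / I₀)' = q ((1 - 4q) J' - 2 J) / ((1 - 4q) I₀)`, and the second equation turns this into the
claimed closed form. -/

theorem summable_add_one_pow_mul_geometric (k : ℕ) {t : ℝ} (ht : |t| < 1) :
    Summable fun n : ℕ => ((n : ℝ) + 1) ^ k * t ^ n := by
  have h : ∀ i ∈ Finset.range (k + 1),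
      Summable fun n : ℕ => (k.choose i : ℝ) * ((n : ℝ) ^ i * t ^ n) := fun i _ =>
    (summable_pow_mul_geometric_of_norm_lt_one (R := ℝ) i ht).mul_left _
  refine (summable_sum h).congr fun n => ?_
  rw [add_pow, Finset.sum_mul]
  exact Finset.sum_congr rfl fun i _ => by ring

section PowerSeries

variable {c : ℕ → ℝ} {k : ℕ} {r x : ℝ}

theorem abs_le_of_abs_le_mul_pow (hc : ∀ n, |c n| ≤ (n + 1) ^ k * r ^ n) (n : ℕ) :
    |c n| ≤ (n + 1) ^ k * |r| ^ n :=
  (hc n).trans <|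
    mul_le_mul_of_nonneg_left ((le_abs_self _).trans (abs_pow r n).le) (by positivity)

theorem summable_mul_pow (hc : ∀ n, |c n| ≤ (n + 1) ^ k * r ^ n) (hx : |r * x| < 1) :
    Summable fun n => c n * x ^ n := by
  refine (summable_add_one_pow_mul_geometric k (abs_abs (r * x) ▸ hx)).of_norm_bounded
    fun n => ?_
  calc ‖c n * x ^ n‖ = |c n| * |x| ^ n := by simp
    _ ≤ (n + 1) ^ k * |r| ^ n * |x| ^ n := by gcongr; exact abs_le_of_abs_le_mul_pow hc n
    _ = (n + 1) ^ k * |r * x| ^ n := by rw [abs_mul, mul_pow, mul_assoc]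

theorem norm_mul_deriv_pow_le (hc : ∀ n, |c n| ≤ (n + 1) ^ k * r ^ n) {y ρ : ℝ} (hy : |y| ≤ ρ)
    (n : ℕ) : ‖c n * (n * y ^ (n - 1))‖ ≤ (n + 1) ^ k * |r| ^ n * (n * ρ ^ (n - 1)) := by
  rw [norm_mul, norm_mul, norm_pow, Real.norm_natCast, Real.norm_eq_abs, Real.norm_eq_abs]
  gcongr
  exact abs_le_of_abs_le_mul_pow hc n

theorem exists_gt_summable_deriv_bound (hx : |r * x| < 1) :
    ∃ ρ, |x| < ρ ∧ Summable fun n : ℕ => ((n : ℝ) + 1) ^ k * |r| ^ n * (n * ρ ^ (n - 1)) := by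
  obtain ⟨ρ, hxρ, hrρ⟩ : ∃ ρ, |x| < ρ ∧ |r| * ρ < 1 :=
    ((continuous_const.mul continuous_id).continuousAt.eventually_lt continuousAt_const
      (by rwa [abs_mul] at hx)).exists_gt
  have hρ : 0 < ρ := (abs_nonneg x).trans_lt hxρ
  refine ⟨ρ, hxρ, ?_⟩
  have hrρ' : |(|r| * ρ)| < 1 := by rwa [abs_of_nonneg (by positivity)]
  refine ((summable_add_one_pow_mul_geometric (k + 1) hrρ').mul_left ρ⁻¹).of_nonneg_of_le
    (fun n => by positivity) fun n => ?_
  cases n with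
  | zero => simp; positivity
  | succ n =>
    rw [Nat.add_sub_cancel, mul_pow, pow_succ _ k, pow_succ ρ]
    field_simp
    gcongr
    push_cast
    linarith

theorem hasDerivAt_tsum_mul_pow (hc : ∀ n, |c n| ≤ (n + 1) ^ k * r ^ n) (hx : |r * x| < 1) :
    HasDerivAt (fun y => ∑' n, c n * y ^ n) (∑' n, c n * (n * x ^ (n - 1))) x := by
  obtain ⟨ρ, hxρ, hu⟩ := exists_gt_summable_deriv_bound (k := k) hx
  have hxI : x ∈ Set.Ioo (-ρ) ρ := abs_lt.mp hxρ
  exact hasDerivAt_tsum_of_isPreconnected hu isOpen_Ioo isPreconnected_Ioo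
    (fun n y _ => (hasDerivAt_pow n y).const_mul (c n))
    (fun n y hy => norm_mul_deriv_pow_le hc (abs_le.mpr ⟨hy.1.le, hy.2.le⟩) n) hxI
    (summable_mul_pow hc hx) hxI

theorem hasSum_deriv_tsum_mul_pow (hc : ∀ n, |c n| ≤ (n + 1) ^ k * r ^ n) (hx : |r * x| < 1) :
    HasSum (fun n => c n * (n * x ^ (n - 1))) (deriv (fun y => ∑' n, c n * y ^ n) x) := by
  obtain ⟨ρ, hxρ, hu⟩ := exists_gt_summable_deriv_bound (k := k) hx
  rw [(hasDerivAt_tsum_mul_pow hc hx).deriv]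
  exact (hu.of_norm_bounded (norm_mul_deriv_pow_le hc hxρ.le)).hasSum

end PowerSeries

section Recurrence

variable {c : ℕ → ℝ} {x F F' : ℝ}

theorem HasSum.coeff_succ_mul_pow_succ (hF : HasSum (fun n => c n * x ^ n) F) :
    HasSum (fun n => c (n + 1) * x ^ (n + 1)) (F - c 0) := by
  simpa using (hasSum_nat_add_iff' 1).mpr hF

theorem HasSum.succ_mul_coeff_succ_mul_pow (hF' : HasSum (fun n => c n * (n * x ^ (n - 1))) F') :
    HasSum (fun n => (n + 1) * c (n + 1) * x ^ n) F' := by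
  simpa [mul_comm, mul_left_comm] using (hasSum_nat_add_iff' 1).mpr hF'

theorem HasSum.natCast_mul_coeff_mul_pow (hF' : HasSum (fun n => c n * (n * x ^ (n - 1))) F') :
    HasSum (fun n => n * c n * x ^ n) (x * F') := by
  refine (hF'.mul_left x).congr_fun fun n => ?_
  cases n with
  | zero => simp
  | succ n => simp only [Nat.add_sub_cancel, pow_succ]; ring

theorem hasSum_recurrence (α β : ℝ) (hF : HasSum (fun n => c n * x ^ n) F)
    (hF' : HasSum (fun n => c n * (n * x ^ (n - 1))) F') :
    HasSum (fun n => ((n + 1) * c (n + 1) - (α * n + β) * c n) * x ^ n)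
      ((1 - α * x) * F' - β * F) := by
  rw [show (1 - α * x) * F' - β * F = F' - α * (x * F') - β * F by ring]
  exact ((hF'.succ_mul_coeff_succ_mul_pow.sub (hF'.natCast_mul_coeff_mul_pow.mul_left α)).sub
    (hF.mul_left β)).congr_fun fun n => by ring

end Recurrence

theorem harmonic_le_self (n : ℕ) : harmonic n ≤ n := by
  calc harmonic n = ∑ i ∈ Finset.range n, ((i + 1 : ℕ) : ℚ)⁻¹ := rfl
    _ ≤ ∑ _i ∈ Finset.range n, (1 : ℚ) :=
        Finset.sum_le_sum fun i _ => inv_le_one_of_one_le₀ (by simp)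
    _ = n := by simp

theorem harmonic_two_mul_succ (n : ℕ) :
    harmonic (2 * (n + 1)) = harmonic (2 * n) + (2 * n + 1 : ℚ)⁻¹ + (2 * n + 2 : ℚ)⁻¹ := by
  rw [show 2 * (n + 1) = 2 * n + 1 + 1 by ring, harmonic_succ, harmonic_succ]
  push_cast
  ring

theorem abs_centralBinom_le (n : ℕ) : |(n.centralBinom : ℝ)| ≤ (n + 1) ^ 0 * 4 ^ n := by
  rw [pow_zero, one_mul, abs_of_nonneg (by positivity)]
  exact_mod_cast n.centralBinom_le_four_pow

theorem abs_centralBinom_mul_harmonic_le (n : ℕ) :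
    |(n.centralBinom : ℝ) * harmonic (2 * n)| ≤ (n + 1) ^ 2 * 4 ^ n := by
  have hH : (harmonic (2 * n) : ℝ) ≤ 2 * n := by exact_mod_cast harmonic_le_self (2 * n)
  have hH0 : (0 : ℝ) ≤ harmonic (2 * n) := by
    exact_mod_cast Finset.sum_nonneg fun i _ => by positivity
  rw [abs_of_nonneg (by positivity)]
  calc (n.centralBinom : ℝ) * harmonic (2 * n) ≤ 4 ^ n * (2 * n) := by
        gcongr
        exact_mod_cast n.centralBinom_le_four_pow
    _ ≤ (n + 1) ^ 2 * 4 ^ n := by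
        rw [mul_comm]
        gcongr
        nlinarith [sq_nonneg (n : ℝ)]

theorem centralBinom_recurrence (n : ℕ) :
    ((n : ℝ) + 1) * (n + 1).centralBinom - (4 * n + 2) * n.centralBinom = 0 := by
  have := congrArg (Nat.cast : ℕ → ℝ) (Nat.succ_mul_centralBinom_succ n)
  push_cast at this
  linear_combination this

theorem centralBinom_mul_harmonic_recurrence (n : ℕ) :
    ((n : ℝ) + 1) * ((n + 1).centralBinom * harmonic (2 * (n + 1)))
      - (4 * n + 2) * (n.centralBinom * harmonic (2 * n))
      = (n + 1).centralBinom / 2 + 2 * n.centralBinom := by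
  have hrec := centralBinom_recurrence n
  have hH := congrArg (Rat.cast : ℚ → ℝ) (harmonic_two_mul_succ n)
  push_cast at hH
  rw [hH]
  field_simp
  linear_combination (2 * (2 * n + 1) * (harmonic (2 * n) : ℝ) + 2) * hrec

section GeneratingFunctions

variable {x : ℝ}

theorem abs_four_mul_lt_one (hx : |x| < 1 / 4) : |4 * x| < 1 := by
  rw [abs_mul, abs_of_pos four_pos]
  linarith

theorem differentiableAt_I₀ (hx : |x| < 1 / 4) : DifferentiableAt ℝ I₀ x :=
  (hasDerivAt_tsum_mul_pow abs_centralBinom_le (abs_four_mul_lt_one hx)).differentiableAt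

theorem differentiableAt_J (hx : |x| < 1 / 4) : DifferentiableAt ℝ J x :=
  (hasDerivAt_tsum_mul_pow abs_centralBinom_mul_harmonic_le
    (abs_four_mul_lt_one hx)).differentiableAt

theorem I₀_ode (hx : |x| < 1 / 4) : (1 - 4 * x) * deriv I₀ x = 2 * I₀ x := by
  have hx' := abs_four_mul_lt_one hx
  have h := hasSum_recurrence 4 2 (summable_mul_pow abs_centralBinom_le hx').hasSum
    (hasSum_deriv_tsum_mul_pow abs_centralBinom_le hx')
  simp only [centralBinom_recurrence, zero_mul] at h
  exact sub_eq_zero.mp (h.unique hasSum_zero)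

theorem J_ode (hx : |x| < 1 / 4) :
    x * ((1 - 4 * x) * deriv J x - 2 * J x) = (I₀ x - 1) / 2 + 2 * x * I₀ x := by
  have hx' := abs_four_mul_lt_one hx
  have hJ := (hasSum_recurrence 4 2
    (summable_mul_pow abs_centralBinom_mul_harmonic_le hx').hasSum
    (hasSum_deriv_tsum_mul_pow abs_centralBinom_mul_harmonic_le hx')).mul_left x
  have hI := (summable_mul_pow abs_centralBinom_le hx').hasSum
  have hI' := (hI.coeff_succ_mul_pow_succ.div_const 2).add (hI.mul_left (2 * x))
  simp only [centralBinom_mul_harmonic_recurrence, Nat.centralBinom_zero, Nat.cast_one] at hJ hI'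
  exact hJ.unique (hI'.congr_fun fun n => by ring)

theorem sqrt_one_sub_four_mul_mul_I₀ (hx : |x| < 1 / 4) : √(1 - 4 * x) * I₀ x = 1 := by
  set U := Set.Ioo (-(1 / 4) : ℝ) (1 / 4)
  have hderiv : ∀ y ∈ U, HasDerivAt (fun y => √(1 - 4 * y) * I₀ y) 0 y := by
    intro y hy
    have hy' : |y| < 1 / 4 := abs_lt.mpr hy
    have hD : 0 < 1 - 4 * y := by linarith [hy.2]
    have hs : HasDerivAt (fun y => √(1 - 4 * y)) (-4 / (2 * √(1 - 4 * y))) y := by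
      simpa using (((hasDerivAt_id' y).const_mul 4).const_sub 1).sqrt hD.ne'
    refine (hs.mul (differentiableAt_I₀ hy').hasDerivAt).congr_deriv ?_
    have hsq := Real.sqrt_pos.mpr hD
    have hss := Real.mul_self_sqrt hD.le
    have hode := I₀_ode hy'
    field_simp
    linear_combination 2 * hode + 2 * deriv I₀ y * hss
  have hconst := isOpen_Ioo.is_const_of_deriv_eq_zero isPreconnected_Ioo
    (fun y hy => (hderiv y hy).differentiableAt.differentiableWithinAt)
    (fun y hy => (hderiv y hy).deriv) (abs_lt.mp hx) (show (0 : ℝ) ∈ U by norm_num [U])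
  have hI₀ : I₀ 0 = 1 := by
    rw [I₀, tsum_eq_single 0 fun n hn => by simp [hn]]
    simp
  simpa [hI₀] using hconst

theorem hasDerivAt_J_div_I₀ (hx : |x| < 1 / 4) :
    HasDerivAt (fun x => J x / I₀ x) ((deriv J x * I₀ x - J x * deriv I₀ x) / I₀ x ^ 2) x :=
  (differentiableAt_J hx).hasDerivAt.div (differentiableAt_I₀ hx).hasDerivAt
    (right_ne_zero_of_mul_eq_one (sqrt_one_sub_four_mul_mul_I₀ hx))

end GeneratingFunctions

theorem J_over_I0_deriv (q : ℝ) (hq : |q| < 1 / 4) :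
    Summable (fun d : ℕ => (Nat.centralBinom d : ℝ) * q ^ d) ∧
    Summable (fun d : ℕ => (Nat.centralBinom d : ℝ) * (harmonic (2 * d) : ℝ) * q ^ d) ∧
    DifferentiableOn ℝ (fun x => J x / I₀ x) (Set.Ioo (-(1 / 4)) (1 / 4)) ∧
    q * deriv (fun x => J x / I₀ x) q
      = 4 * q / (1 - 4 * q) - 1 / (2 * Real.sqrt (1 - 4 * q)) + 1 / 2 := by
  refine ⟨summable_mul_pow abs_centralBinom_le (abs_four_mul_lt_one hq),
    summable_mul_pow abs_centralBinom_mul_harmonic_le (abs_four_mul_lt_one hq),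
    fun x hx => (hasDerivAt_J_div_I₀ (abs_lt.mpr hx)).differentiableAt.differentiableWithinAt, ?_⟩
  rw [(hasDerivAt_J_div_I₀ hq).deriv]
  have hD : 0 < 1 - 4 * q := by linarith [(abs_lt.mp hq).2]
  have hs := Real.sqrt_pos.mpr hD
  have hss := Real.mul_self_sqrt hD.le
  have hI₀ : I₀ q = (√(1 - 4 * q))⁻¹ :=
    eq_inv_of_mul_eq_one_right (sqrt_one_sub_four_mul_mul_I₀ hq)
  have hI₀' : deriv I₀ q = 2 * I₀ q / (1 - 4 * q) := by
    rw [eq_div_iff hD.ne', mul_comm, I₀_ode hq]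
  have hJ := J_ode hq
  rw [hI₀] at hJ hI₀'
  rw [hI₀', hI₀]
  generalize hDdef : 1 - 4 * q = D at *
  generalize √D = s at *
  have hJ' : 2 * s * (q * (D * deriv J q - 2 * J q)) = 1 - s + 4 * q := by
    rw [hJ]
    field_simp
    ring
  field_simp
  linear_combination s * hJ' - hss + s * hDdef
end

section
/- Let $n\ge 2$ be an integer, fix a real $q$ with $0<q<1/4$, and fix pairwise distinct nonzero reals $\mu_1,\dots,\mu_n$. For $t>0$ set $\lambda_i = t\mu_i$ and, writing $L^{\pm}(\lambda,q)=\frac{2\lambda n q\pm\sqrt{1-4q+\lambda^2 n^2 q}}{1-4q}$, define $G(t)=\sum_{i=1}^{n}\Big(-\frac{1}{2}-\sum_{j\ne i}\frac{1}{\lambda_i-\lambda_j}+\frac{1}{2+n\lambda_i}\Big)\big(L^{+}(\lambda_i,q)-1\big)+\sum_{i=1}^{n}\Big(\frac{1}{2}-\sum_{j\ne i}\frac{1}{\lambda_i-\lambda_j}+\frac{1}{-2+n\lambda_i}\Big)\big(L^{-}(\lambda_i,q)+1\big)$. Then there is $t_0>0$ such that $G(t)$ is defined for all $0<t<t_0$,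 and $\lim_{t\to 0^{+}} G(t) = -\,2n^2(n-1)\,\frac{q}{1-4q}.$ -/
/-!
In both sums the pole terms `∑_{j ≠ i} 1 / (λ_i - λ_j)` multiply `L⁺ - 1` and `L⁻ + 1` with the
same coefficient, and `(L⁺ - 1) + (L⁻ + 1) = 4 λ n q / (1 - 4q)` is linear in `λ`. So they
contribute `-4nq / (1 - 4q) · ∑_i ∑_{j ≠ i} λ_i / (λ_i - λ_j)`, and pairing `(i, j)` with `(j, i)`
shows that the double sum is `n (n - 1) / 2` for every `t`. What remains is continuous at `t = 0`,
where its coefficients `∓1/2 ± 1/2` vanish.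
-/

open Real Filter Finset Topology

theorem two_mul_sum_sum_erase_div_sub {ι K : Type*} [Fintype ι] [DecidableEq ι] [Field K]
    {x : ι → K} (hx : Function.Injective x) :
    2 * ∑ i, ∑ j ∈ univ.erase i, x i / (x i - x j) =
      Fintype.card ι * (Fintype.card ι - 1) := by
  have hswap : ∑ i, ∑ j ∈ univ.erase i, x j / (x j - x i) =
      ∑ i, ∑ j ∈ univ.erase i, x i / (x i - x j) :=
    sum_comm' (by simp [and_comm, eq_comm])
  have hpair : ∀ i, ∀ j ∈ univ.erase i, x i / (x i - x j) + x j / (x j - x i) = 1 := by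
    intro i j hj
    have hij : x i - x j ≠ 0 := sub_ne_zero.2 (hx.ne (ne_of_mem_erase hj).symm)
    have hji : x j - x i ≠ 0 := sub_ne_zero.2 (hx.ne (ne_of_mem_erase hj))
    field_simp
    ring
  calc 2 * ∑ i, ∑ j ∈ univ.erase i, x i / (x i - x j)
      = ∑ i, ∑ j ∈ univ.erase i, (x i / (x i - x j) + x j / (x j - x i)) := by
        rw [two_mul]
        nth_rewrite 2 [← hswap]
        simp only [← sum_add_distrib]
    _ = ∑ i : ι, ∑ j ∈ univ.erase i, (1 : K) := sum_congr rfl fun i _ => sum_congr rfl (hpair i)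
    _ = Fintype.card ι * (Fintype.card ι - 1) := by
        simp only [sum_erase_eq_sub (mem_univ _), sum_const, card_univ, nsmul_eq_mul, mul_one]

/-- `L^±(x, q)` of the paper, with `n` the dimension. -/
noncomputable def Lplus (n q x : ℝ) : ℝ :=
  (2 * x * n * q + √(1 - 4 * q + x ^ 2 * n ^ 2 * q)) / (1 - 4 * q)

noncomputable def Lminus (n q x : ℝ) : ℝ :=
  (2 * x * n * q - √(1 - 4 * q + x ^ 2 * n ^ 2 * q)) / (1 - 4 * q)

theorem Lplus_sub_one_add_Lminus_add_one (n q x : ℝ) :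
    (Lplus n q x - 1) + (Lminus n q x + 1) = x * (4 * n * q / (1 - 4 * q)) := by
  simp only [Lplus, Lminus]
  ring

noncomputable def vertexRegular (n q x : ℝ) : ℝ :=
  (-(1 / 2) + 1 / (2 + n * x)) * (Lplus n q x - 1) +
    (1 / 2 + 1 / (-2 + n * x)) * (Lminus n q x + 1)

theorem vertexRegular_zero (n q : ℝ) : vertexRegular n q 0 = 0 := by
  norm_num [vertexRegular]

theorem continuousAt_vertexRegular_zero (n q : ℝ) : ContinuousAt (vertexRegular n q) 0 := by
  unfold vertexRegular Lplus Lminus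
  fun_prop (disch := norm_num)

theorem vertex_sum_eq_sum_vertexRegular_sub (n : ℕ) (q : ℝ) {x : Fin n → ℝ} (hx : Function.Injective x) :
    (∑ i, (-(1 / 2) - (∑ j ∈ univ.erase i, 1 / (x i - x j)) + 1 / (2 + n * x i)) *
        (Lplus n q (x i) - 1)) +
      ∑ i, ((1 / 2) - (∑ j ∈ univ.erase i, 1 / (x i - x j)) + 1 / (-2 + n * x i)) *
        (Lminus n q (x i) + 1) =
      ∑ i, vertexRegular n q (x i) - 2 * n ^ 2 * ((n : ℝ) - 1) * q / (1 - 4 * q) := by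
  have hsing := two_mul_sum_sum_erase_div_sub hx
  simp only [Fintype.card_fin, div_eq_mul_one_div (x _), ← mul_sum] at hsing
  have hterm : ∀ i, (-(1 / 2) - (∑ j ∈ univ.erase i, 1 / (x i - x j)) + 1 / (2 + n * x i)) *
        (Lplus n q (x i) - 1) +
      ((1 / 2) - (∑ j ∈ univ.erase i, 1 / (x i - x j)) + 1 / (-2 + n * x i)) *
        (Lminus n q (x i) + 1) =
      vertexRegular n q (x i) -
        (4 * n * q / (1 - 4 * q)) * (x i * ∑ j ∈ univ.erase i, 1 / (x i - x j)) := by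
    intro i
    rw [vertexRegular]
    linear_combination (-∑ j ∈ univ.erase i, 1 / (x i - x j)) *
      Lplus_sub_one_add_Lminus_add_one n q (x i)
  rw [← sum_add_distrib, sum_congr rfl fun i _ => hterm i, sum_sub_distrib, ← mul_sum]
  linear_combination (-(2 * n * q / (1 - 4 * q))) * hsing

theorem vertex_contribution_limit_general (n : ℕ) (q : ℝ)
    (μ : Fin n → ℝ) (hinj : Function.Injective μ)
    (G : ℝ → ℝ)
    (hG : ∀ t : ℝ, G t =
      (∑ i : Fin n,
        (-(1 / 2) - (∑ j ∈ Finset.univ.erase i, 1 / (t * μ i - t * μ j))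
            + 1 / (2 + n * (t * μ i))) *
          ((2 * (t * μ i) * n * q
              + Real.sqrt (1 - 4 * q + (t * μ i) ^ 2 * n ^ 2 * q)) / (1 - 4 * q) - 1))
      + ∑ i : Fin n,
        ((1 / 2) - (∑ j ∈ Finset.univ.erase i, 1 / (t * μ i - t * μ j))
            + 1 / (-2 + n * (t * μ i))) *
          ((2 * (t * μ i) * n * q
              - Real.sqrt (1 - 4 * q + (t * μ i) ^ 2 * n ^ 2 * q)) / (1 - 4 * q) + 1)) :
    ∃ t0 > (0 : ℝ),
      (∀ t : ℝ, 0 < t → t < t0 →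
        (∀ i : Fin n, 2 + n * (t * μ i) ≠ 0 ∧ -2 + n * (t * μ i) ≠ 0) ∧
        (∀ i j : Fin n, i ≠ j → t * μ i ≠ t * μ j)) ∧
      Tendsto G (nhdsWithin 0 (Set.Ioi 0))
        (nhds (-2 * n ^ 2 * ((n : ℝ) - 1) * q / (1 - 4 * q))) := by
  have hscaled : ∀ t : ℝ, t ≠ 0 → Function.Injective fun i => t * μ i :=
    fun t ht _ _ h => hinj (mul_left_cancel₀ ht h)
  have hden : ∀ᶠ t in 𝓝 (0 : ℝ), ∀ i, 2 + n * (t * μ i) ≠ 0 ∧ -2 + n * (t * μ i) ≠ 0 :=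
    eventually_all.2 fun i =>
      ((by fun_prop : Continuous fun t : ℝ => 2 + n * (t * μ i)).continuousAt.eventually_ne
          (by norm_num)).and
        ((by fun_prop : Continuous fun t : ℝ => -2 + n * (t * μ i)).continuousAt.eventually_ne
          (by norm_num))
  obtain ⟨t0, ht0, hsub⟩ := mem_nhdsGT_iff_exists_Ioo_subset.1 (nhdsWithin_le_nhds hden)
  refine ⟨t0, ht0, fun t ht htt => ⟨hsub ⟨ht, htt⟩, fun i j hij => (hscaled t ht.ne').ne hij⟩, ?_⟩
  have hreg : Tendsto (fun t : ℝ => ∑ i, vertexRegular n q (t * μ i)) (𝓝 0) (𝓝 0) := by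
    simpa [vertexRegular_zero] using tendsto_finsetSum univ fun i _ =>
      ((continuousAt_vertexRegular_zero n q).comp_of_eq (continuous_mul_const (μ i)).continuousAt
        (zero_mul _)).tendsto
  have hlim := hreg.sub_const (2 * n ^ 2 * ((n : ℝ) - 1) * q / (1 - 4 * q))
  rw [zero_sub, ← neg_div, ← neg_mul, ← neg_mul, ← neg_mul] at hlim
  refine (hlim.mono_left nhdsWithin_le_nhds).congr' ?_
  filter_upwards [self_mem_nhdsWithin] with t (ht : 0 < t)
  rw [hG t]
  exact (vertex_sum_eq_sum_vertexRegular_sub n q (hscaled t ht.ne')).symm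

theorem vertex_contribution_limit (n : ℕ) (hn : 2 ≤ n) (q : ℝ)
    (hq : q ∈ Set.Ioo (0 : ℝ) (1 / 4))
    (μ : Fin n → ℝ) (hinj : Function.Injective μ) (hne : ∀ i, μ i ≠ 0)
    (G : ℝ → ℝ)
    (hG : ∀ t : ℝ, G t =
      (∑ i : Fin n,
        (-(1 / 2) - (∑ j ∈ Finset.univ.erase i, 1 / (t * μ i - t * μ j))
            + 1 / (2 + n * (t * μ i))) *
          ((2 * (t * μ i) * n * q
              + Real.sqrt (1 - 4 * q + (t * μ i) ^ 2 * n ^ 2 * q)) / (1 - 4 * q) - 1))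
      + ∑ i : Fin n,
        ((1 / 2) - (∑ j ∈ Finset.univ.erase i, 1 / (t * μ i - t * μ j))
            + 1 / (-2 + n * (t * μ i))) *
          ((2 * (t * μ i) * n * q
              - Real.sqrt (1 - 4 * q + (t * μ i) ^ 2 * n ^ 2 * q)) / (1 - 4 * q) + 1)) :
    ∃ t0 > (0 : ℝ),
      (∀ t : ℝ, 0 < t → t < t0 →
        (∀ i : Fin n, 2 + n * (t * μ i) ≠ 0 ∧ -2 + n * (t * μ i) ≠ 0) ∧
        (∀ i j : Fin n, i ≠ j → t * μ i ≠ t * μ j)) ∧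
      Tendsto G (nhdsWithin 0 (Set.Ioi 0))
        (nhds (-2 * n ^ 2 * ((n : ℝ) - 1) * q / (1 - 4 * q))) :=
  vertex_contribution_limit_general n q μ hinj G hG
end
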